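/- arXiv:1601.07085 — 2 statements merged into one kernel-verified Lean document; each statement's English description precedes it below -/
import Mathlib

section
/- Well-posedness of the discrete curl–divergence problem (Lemma 2.7): assume (SgnCancel): for every primary cell i and every vertex ν, the sum of t_{e,ν}·n_{e,i} over all edges e incident to both i and ν equals 0; (Euler): card C + card V = card E + 1; (KerSkew): the only dual scalar field ψ with ∇̃⊥_h ψ = 0 is ψ = 0; (KerGrad): every primary scalar field φ with ∇_h φ = 0 is constant; and (TwoCells): every edge is incident to exactly two distinct primary cells with opposite signs n_{e,i}. Then for every pair (ω, δ) consisting of a dual scalar field ω and a primary scalar field δ with Σ_{i∈C} A_i δ_i = 0, there exists a unique discrete vector field u ∈ ℝ^E such that ∇̃_h×u = ω and ∇_h·u = δ. -/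
open Finset

noncomputable section

/-- A combinatorial staggered mesh: primary cells `C`, dual cells (vertices) `V`,
edges `E`, with areas, edge lengths, incidence relations and signs. -/
structure StagMesh (C V E : Type) [Fintype C] [Fintype V] [Fintype E]
    [DecidableEq C] [DecidableEq V] where
  /-- primary cell areas -/
  Ac : C → ℝ
  /-- dual cell areas -/
  Av : V → ℝ
  /-- primary edge lengths -/
  l : E → ℝ
  /-- dual edge lengths -/
  d : E → ℝ
  Ac_pos : ∀ i, 0 < Ac i
  Av_pos : ∀ ν, 0 < Av ν
  l_pos : ∀ e, 0 < l e
  d_pos : ∀ e, 0 < d e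
  /-- primary cells incident to an edge -/
  EC : E → Finset C
  /-- vertices (dual cells) incident to an edge -/
  EV : E → Finset V
  /-- sign `n_{e,i}` attached to an incident edge–cell pair -/
  n : E → C → ℝ
  /-- sign `t_{e,ν}` attached to an incident edge–vertex pair -/
  t : E → V → ℝ
  n_sign : ∀ e i, i ∈ EC e → n e i = 1 ∨ n e i = -1
  t_sign : ∀ e ν, ν ∈ EV e → t e ν = 1 ∨ t e ν = -1

namespace StagMesh

variable {C V E : Type} [Fintype C] [Fintype V] [Fintype E]
  [DecidableEq C] [DecidableEq V]

/-- diamond area `A_e = (1/2) l_e d_e` -/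
def Ae (M : StagMesh C V E) (e : E) : ℝ := (1 / 2) * M.l e * M.d e

/-- discrete gradient `[∇_h φ]_e = -(1/d_e) Σ_{i ~ e} n_{e,i} φ_i` -/
def grad (M : StagMesh C V E) (φ : C → ℝ) : E → ℝ :=
  fun e => -(1 / M.d e) * ∑ i ∈ M.EC e, M.n e i * φ i

/-- discrete skew gradient `[∇̃⊥_h ψ]_e = (1/l_e) Σ_{ν ~ e} t_{e,ν} ψ_ν` -/
def skewGrad (M : StagMesh C V E) (ψ : V → ℝ) : E → ℝ :=
  fun e => (1 / M.l e) * ∑ ν ∈ M.EV e, M.t e ν * ψ ν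

/-- discrete divergence `[∇_h·u]_i = (1/A_i) Σ_{e ~ i} l_e n_{e,i} u_e` -/
def dvg (M : StagMesh C V E) (u : E → ℝ) : C → ℝ :=
  fun i => (1 / M.Ac i) * ∑ e ∈ univ.filter (fun e => i ∈ M.EC e), M.l e * M.n e i * u e

/-- discrete curl `[∇̃_h×u]_ν = -(1/A_ν) Σ_{e ~ ν} d_e t_{e,ν} u_e` -/
def curl (M : StagMesh C V E) (u : E → ℝ) : V → ℝ :=
  fun ν => -(1 / M.Av ν) * ∑ e ∈ univ.filter (fun e => ν ∈ M.EV e), M.d e * M.t e ν * u e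

/-- area-weighted inner product on primary scalar fields -/
def innerC (M : StagMesh C V E) (φ φ' : C → ℝ) : ℝ := ∑ i, M.Ac i * φ i * φ' i

/-- area-weighted inner product on dual scalar fields -/
def innerV (M : StagMesh C V E) (ψ ψ' : V → ℝ) : ℝ := ∑ ν, M.Av ν * ψ ν * ψ' ν

/-- diamond-weighted inner product on discrete vector fields -/
def innerE (M : StagMesh C V E) (u u' : E → ℝ) : ℝ := ∑ e, M.Ae e * u e * u' e

/-- weighted `L²` norm on primary scalar fields -/
noncomputable def normC (M : StagMesh C V E) (φ : C → ℝ) : ℝ := Real.sqrt (M.innerC φ φ)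

/-- weighted `L²` norm on dual scalar fields -/
noncomputable def normV (M : StagMesh C V E) (ψ : V → ℝ) : ℝ := Real.sqrt (M.innerV ψ ψ)

/-- weighted `L²` norm on discrete vector fields -/
noncomputable def normE (M : StagMesh C V E) (u : E → ℝ) : ℝ := Real.sqrt (M.innerE u u)

/-- sign-cancellation condition: for every primary cell `i` and vertex `ν`,
`Σ_{e ~ i, e ~ ν} t_{e,ν} n_{e,i} = 0`. -/
def SgnCancel (M : StagMesh C V E) : Prop :=
  ∀ (i : C) (ν : V),
    ∑ e ∈ univ.filter (fun e => i ∈ M.EC e ∧ ν ∈ M.EV e), M.t e ν * M.n e i = 0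

end StagMesh

/-!
Let `S (φ, ψ) = ∇_h φ + ∇̃⊥_h ψ` and `T u = (∇̃_h×u, ∇_h·u)`. For the diamond-weighted inner
product on edges, `∇_h` and `∇̃⊥_h` are adjoint to `-½ ∇_h·` and `-½ ∇̃_h×` (with the area
weights on cells and vertices), so `ker T` is orthogonal to `range S`. Sign cancellation gives
`∇̃_h×∇_h = 0`, hence gradients are orthogonal to skew gradients and `ker S` consists of the pairs
`(constant, 0)`; by Euler's formula `S` is onto, so `T` is injective. Since every edge enters the
divergence of its two cells with opposite signs, `T` maps into the hyperplane `Σ A_i δ_i = 0`,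
whose dimension is `|V| + |C| - 1 = |E|`; so `T` is onto it.
-/

namespace StagMesh

variable {C V E : Type} [Fintype C] [Fintype V] [Fintype E]
  [DecidableEq C] [DecidableEq V] (M : StagMesh C V E)

def gradₗ : (C → ℝ) →ₗ[ℝ] (E → ℝ) where
  toFun := M.grad
  map_add' φ φ' := by ext e; simp [grad, mul_add, sum_add_distrib]
  map_smul' c φ := by ext e; simp [grad, mul_sum, mul_left_comm]

def skewGradₗ : (V → ℝ) →ₗ[ℝ] (E → ℝ) where
  toFun := M.skewGrad
  map_add' ψ ψ' := by ext e; simp [skewGrad, mul_add, sum_add_distrib]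
  map_smul' c ψ := by ext e; simp [skewGrad, mul_sum, mul_left_comm]

def curlₗ : (E → ℝ) →ₗ[ℝ] (V → ℝ) where
  toFun := M.curl
  map_add' u u' := by ext ν; simp [curl, mul_add, sum_add_distrib]
  map_smul' c u := by ext ν; simp [curl, mul_sum, mul_left_comm]

def dvgₗ : (E → ℝ) →ₗ[ℝ] (C → ℝ) where
  toFun := M.dvg
  map_add' u u' := by ext i; simp [dvg, mul_add, sum_add_distrib]
  map_smul' c u := by ext i; simp [dvg, mul_sum, mul_left_comm]

theorem innerE_grad_left (φ : C → ℝ) (u : E → ℝ) :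
    M.innerE (M.grad φ) u = -(1 / 2) * M.innerC φ (M.dvg u) := by
  have edge (e : E) : M.Ae e * M.grad φ e * u e
      = ∑ i ∈ M.EC e, -(1 / 2) * (M.l e * M.n e i * u e * φ i) := by
    have := (M.d_pos e).ne'
    simp only [Ae, grad, mul_sum, sum_mul]
    refine sum_congr rfl fun i _ => ?_
    field_simp
  have cell (i : C) : M.Ac i * φ i * M.dvg u i
      = ∑ e with i ∈ M.EC e, M.l e * M.n e i * u e * φ i := by
    have := (M.Ac_pos i).ne'
    simp only [dvg, mul_sum]
    refine sum_congr rfl fun e _ => ?_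
    field_simp
  calc M.innerE (M.grad φ) u
      = ∑ e, ∑ i ∈ M.EC e, -(1 / 2) * (M.l e * M.n e i * u e * φ i) :=
        sum_congr rfl fun e _ => edge e
    _ = ∑ i, ∑ e with i ∈ M.EC e, -(1 / 2) * (M.l e * M.n e i * u e * φ i) := sum_comm' (by simp)
    _ = -(1 / 2) * M.innerC φ (M.dvg u) := by simp only [innerC, cell, mul_sum]

theorem innerE_skewGrad_left (ψ : V → ℝ) (u : E → ℝ) :
    M.innerE (M.skewGrad ψ) u = -(1 / 2) * M.innerV ψ (M.curl u) := by
  have edge (e : E) : M.Ae e * M.skewGrad ψ e * u e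
      = ∑ ν ∈ M.EV e, (1 / 2) * (M.d e * M.t e ν * u e * ψ ν) := by
    have := (M.l_pos e).ne'
    simp only [Ae, skewGrad, mul_sum, sum_mul]
    refine sum_congr rfl fun ν _ => ?_
    field_simp
  have vertex (ν : V) : M.Av ν * ψ ν * M.curl u ν
      = -∑ e with ν ∈ M.EV e, M.d e * M.t e ν * u e * ψ ν := by
    have := (M.Av_pos ν).ne'
    simp only [curl, mul_sum, ← sum_neg_distrib]
    refine sum_congr rfl fun e _ => ?_
    field_simp
  calc M.innerE (M.skewGrad ψ) u
      = ∑ e, ∑ ν ∈ M.EV e, (1 / 2) * (M.d e * M.t e ν * u e * ψ ν) :=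
        sum_congr rfl fun e _ => edge e
    _ = ∑ ν, ∑ e with ν ∈ M.EV e, (1 / 2) * (M.d e * M.t e ν * u e * ψ ν) := sum_comm' (by simp)
    _ = -(1 / 2) * M.innerV ψ (M.curl u) := by
      simp only [innerV, vertex, mul_sum, sum_neg_distrib, mul_neg, neg_mul, neg_neg]

theorem eq_zero_of_innerE_self_eq_zero {u : E → ℝ} (h : M.innerE u u = 0) : u = 0 := by
  have hAe (e : E) : 0 < M.Ae e := by have := M.l_pos e; have := M.d_pos e; unfold Ae; positivity
  have hnonneg (e : E) : 0 ≤ M.Ae e * u e * u e := by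
    rw [mul_assoc]; exact mul_nonneg (hAe e).le (mul_self_nonneg _)
  ext e
  have he := (sum_eq_zero_iff_of_nonneg fun e _ => hnonneg e).mp h e (mem_univ e)
  rw [mul_assoc, mul_eq_zero, mul_self_eq_zero] at he
  exact he.resolve_left (hAe e).ne'

theorem curl_grad (hsc : M.SgnCancel) (φ : C → ℝ) : M.curl (M.grad φ) = 0 := by
  ext ν
  have edge (e : E) : M.d e * M.t e ν * M.grad φ e = ∑ i ∈ M.EC e, -(M.t e ν * M.n e i * φ i) := by
    have := (M.d_pos e).ne'
    simp only [grad, mul_sum]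
    refine sum_congr rfl fun i _ => ?_
    field_simp
  calc M.curl (M.grad φ) ν
      = -(1 / M.Av ν) * ∑ e with ν ∈ M.EV e, ∑ i ∈ M.EC e, -(M.t e ν * M.n e i * φ i) := by
        simp only [curl, edge]
    _ = -(1 / M.Av ν) * ∑ i, -((∑ e with i ∈ M.EC e ∧ ν ∈ M.EV e, M.t e ν * M.n e i) * φ i) := by
        rw [sum_comm' (t' := univ) (s' := fun i => {e | i ∈ M.EC e ∧ ν ∈ M.EV e})
          (by simp [and_comm])]
        simp only [sum_mul, sum_neg_distrib]
    _ = 0 := by simp [hsc _ ν]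

theorem sum_Ac_mul_dvg
    (htwo : ∀ e : E, ∃ i j : C, i ≠ j ∧ M.EC e = {i, j} ∧ M.n e i = - M.n e j)
    (u : E → ℝ) : ∑ i, M.Ac i * M.dvg u i = 0 := by
  have cell (i : C) : M.Ac i * M.dvg u i = ∑ e with i ∈ M.EC e, M.l e * M.n e i * u e := by
    have := (M.Ac_pos i).ne'
    simp only [dvg]
    field_simp
  calc ∑ i, M.Ac i * M.dvg u i
      = ∑ e, ∑ i ∈ M.EC e, M.l e * M.n e i * u e := by
        simp only [cell]; exact (sum_comm' (by simp)).symm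
    _ = 0 := sum_eq_zero fun e _ => by
        obtain ⟨i, j, hij, hEC, hn⟩ := htwo e
        rw [hEC, sum_pair hij, hn]
        ring

theorem innerE_skewGrad_grad (hsc : M.SgnCancel) (ψ : V → ℝ) (φ : C → ℝ) :
    M.innerE (M.skewGrad ψ) (M.grad φ) = 0 := by
  simp [innerE_skewGrad_left, M.curl_grad hsc, innerV]

theorem card_le_card_of_skewGrad_injective (hks : ∀ ψ : V → ℝ, M.skewGrad ψ = 0 → ψ = 0) :
    Fintype.card V ≤ Fintype.card E := by
  have hinj : Function.Injective M.skewGradₗ :=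
    LinearMap.ker_eq_bot.mp (LinearMap.ker_eq_bot'.mpr hks)
  simpa using LinearMap.finrank_le_finrank_of_injective hinj

def potential : (C → ℝ) × (V → ℝ) →ₗ[ℝ] (E → ℝ) := M.gradₗ.coprod M.skewGradₗ

theorem potential_apply (p : (C → ℝ) × (V → ℝ)) :
    M.potential p = M.grad p.1 + M.skewGrad p.2 := rfl

def curlDvg : (E → ℝ) →ₗ[ℝ] (V → ℝ) × (C → ℝ) := M.curlₗ.prod M.dvgₗ

theorem curlDvg_apply (u : E → ℝ) : M.curlDvg u = (M.curl u, M.dvg u) := rfl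

theorem innerE_potential_left (p : (C → ℝ) × (V → ℝ)) (u : E → ℝ) :
    M.innerE (M.potential p) u = -(1 / 2) * (M.innerC p.1 (M.dvg u) + M.innerV p.2 (M.curl u)) := by
  have hadd : M.innerE (M.grad p.1 + M.skewGrad p.2) u
      = M.innerE (M.grad p.1) u + M.innerE (M.skewGrad p.2) u := by
    simp only [innerE, Pi.add_apply, mul_add, add_mul, sum_add_distrib]
  rw [potential_apply, hadd, innerE_grad_left, innerE_skewGrad_left]
  ring

theorem curlDvg_injective (hsurj : Function.Surjective M.potential) :
    Function.Injective M.curlDvg := by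
  refine LinearMap.ker_eq_bot.mp (LinearMap.ker_eq_bot'.mpr fun u hu => ?_)
  obtain ⟨hcurl, hdvg⟩ : M.curl u = 0 ∧ M.dvg u = 0 := Prod.mk.inj hu
  obtain ⟨p, rfl⟩ := hsurj u
  apply M.eq_zero_of_innerE_self_eq_zero
  rw [innerE_potential_left, hcurl, hdvg]
  simp [innerC, innerV]

theorem ker_potential_le_span [Nonempty C] (hsc : M.SgnCancel)
    (hks : ∀ ψ : V → ℝ, M.skewGrad ψ = 0 → ψ = 0)
    (hkg : ∀ φ : C → ℝ, M.grad φ = 0 → ∀ i j : C, φ i = φ j) :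
    LinearMap.ker M.potential ≤ ℝ ∙ ((fun _ => 1, 0) : (C → ℝ) × (V → ℝ)) := by
  intro p hp
  have hsum : M.grad p.1 = -M.skewGrad p.2 :=
    eq_neg_of_add_eq_zero_left ((M.potential_apply p).symm.trans hp)
  have hgrad : M.grad p.1 = 0 := by
    apply M.eq_zero_of_innerE_self_eq_zero
    calc M.innerE (M.grad p.1) (M.grad p.1)
        = -M.innerE (M.skewGrad p.2) (M.grad p.1) := by
          nth_rw 1 [hsum]; simp [innerE]
      _ = 0 := by rw [M.innerE_skewGrad_grad hsc, neg_zero]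
  have hψ : p.2 = 0 := hks _ (neg_eq_zero.mp (hsum ▸ hgrad))
  let i₀ : C := Classical.arbitrary C
  refine Submodule.mem_span_singleton.mpr ⟨p.1 i₀, Prod.ext (funext fun j => ?_) ?_⟩
  · simp [hkg _ hgrad j i₀]
  · simp [hψ]

theorem potential_surjective [Nonempty C] (hsc : M.SgnCancel)
    (hks : ∀ ψ : V → ℝ, M.skewGrad ψ = 0 → ψ = 0)
    (hkg : ∀ φ : C → ℝ, M.grad φ = 0 → ∀ i j : C, φ i = φ j)
    (heuler : Fintype.card C + Fintype.card V = Fintype.card E + 1) :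
    Function.Surjective M.potential := by
  have hker : Module.finrank ℝ (LinearMap.ker M.potential) ≤ 1 :=
    (Submodule.finrank_mono (M.ker_potential_le_span hsc hks hkg)).trans
      (by simpa using finrank_span_le_card {((fun _ => 1, 0) : (C → ℝ) × (V → ℝ))})
  have hrank := M.potential.finrank_range_add_finrank_ker
  have hle := (LinearMap.range M.potential).finrank_le
  simp only [Module.finrank_prod, Module.finrank_fintype_fun_eq_card] at hrank hle
  rw [← LinearMap.range_eq_top]
  apply Submodule.eq_top_of_finrank_eq
  simp only [Module.finrank_fintype_fun_eq_card]
  omega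

def integralC : (C → ℝ) →ₗ[ℝ] ℝ where
  toFun δ := ∑ i, M.Ac i * δ i
  map_add' δ δ' := by simp [mul_add, sum_add_distrib]
  map_smul' c δ := by simp [mul_sum, mul_left_comm]

theorem integralC_surjective [Nonempty C] : Function.Surjective M.integralC := by
  intro r
  let i₀ : C := Classical.arbitrary C
  refine ⟨Pi.single i₀ (r / M.Ac i₀), ?_⟩
  have := (M.Ac_pos i₀).ne'
  simp [integralC, Pi.single_apply]
  field_simp

def compatibleData : Submodule ℝ ((V → ℝ) × (C → ℝ)) :=
  LinearMap.ker (M.integralC ∘ₗ LinearMap.snd ℝ (V → ℝ) (C → ℝ))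

theorem finrank_compatibleData [Nonempty C] :
    Module.finrank ℝ M.compatibleData + 1 = Fintype.card V + Fintype.card C := by
  have hsurj : Function.Surjective (M.integralC ∘ₗ LinearMap.snd ℝ (V → ℝ) (C → ℝ)) :=
    M.integralC_surjective.comp Prod.snd_surjective
  have hrank := (M.integralC ∘ₗ LinearMap.snd ℝ (V → ℝ) (C → ℝ)).finrank_range_add_finrank_ker
  rw [LinearMap.range_eq_top.mpr hsurj] at hrank
  simp only [finrank_top, Module.finrank_self, Module.finrank_prod,
    Module.finrank_fintype_fun_eq_card] at hrank
  rw [compatibleData]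
  omega

theorem range_curlDvg [Nonempty C]
    (htwo : ∀ e : E, ∃ i j : C, i ≠ j ∧ M.EC e = {i, j} ∧ M.n e i = - M.n e j)
    (heuler : Fintype.card C + Fintype.card V = Fintype.card E + 1)
    (hinj : Function.Injective M.curlDvg) :
    LinearMap.range M.curlDvg = M.compatibleData := by
  apply Submodule.eq_of_le_of_finrank_eq
  · rintro _ ⟨u, rfl⟩
    exact M.sum_Ac_mul_dvg htwo u
  · have := M.finrank_compatibleData
    rw [LinearMap.finrank_range_of_inj hinj, Module.finrank_fintype_fun_eq_card]
    omega

end StagMesh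

open StagMesh

/-- well-posedness of the discrete curl–divergence problem: under
the standing mesh hypotheses, for every dual scalar field `ω` and every primary
scalar field `δ` with `Σ A_i δ_i = 0` there is a unique discrete vector field
`u` with `∇̃_h×u = ω` and `∇_h·u = δ`. -/
theorem curl_div_wellposed
    {C V E : Type} [Fintype C] [Fintype V] [Fintype E]
    [DecidableEq C] [DecidableEq V]
    (M : StagMesh C V E)
    (hsc : M.SgnCancel)
    (heuler : Fintype.card C + Fintype.card V = Fintype.card E + 1)
    (hks : ∀ ψ : V → ℝ, M.skewGrad ψ = 0 → ψ = 0)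
    (hkg : ∀ φ : C → ℝ, M.grad φ = 0 → ∀ i j : C, φ i = φ j)
    (htwo : ∀ e : E, ∃ i j : C, i ≠ j ∧ M.EC e = {i, j} ∧ M.n e i = - M.n e j)
    (ω : V → ℝ) (δ : C → ℝ) (hδ : (∑ i, M.Ac i * δ i) = 0) :
    ∃! u : E → ℝ, M.curl u = ω ∧ M.dvg u = δ := by
  have : Nonempty C :=
    Fintype.card_pos_iff.mp (by have := M.card_le_card_of_skewGrad_injective hks; omega)
  have hinj := M.curlDvg_injective (M.potential_surjective hsc hks hkg heuler)
  obtain ⟨u, hu⟩ : (ω, δ) ∈ LinearMap.range M.curlDvg := by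
    rw [M.range_curlDvg htwo heuler hinj]
    exact hδ
  refine ⟨u, Prod.mk.inj hu, fun v hv => hinj ?_⟩
  rw [hu, curlDvg_apply, hv.1, hv.2]
end
end

section
/- Energy bound for the discrete MAC solution (Theorem 3.2, second part, eq. (165)): let E = E_int ⊔ E_bd be a partition of the edges into interior and boundary edges, V_h := {u ∈ ℝ^E : u_e = 0 for all e ∈ E_bd, and [∇_h·u]_i = 0 for all i ∈ C}, and assume any u ∈ V_h with ∇̃_h×u = 0 equals 0. Suppose the discrete forcing has the Helmholtz form f = ∇̃⊥_h ψ^f + ∇_h φ^f for some dual scalar field ψ^f and primary scalar field φ^f. Then the unique u_h ∈ V_h satisfying (∇̃_h×u_h, ∇̃_h×v)_0 = 2 (f, v)_0 for all v ∈ V_h obeys the a priori bound |∇̃_h×u_h|_0 ≤ |ψ^f|_0, where |ω|_0² = Σ_{ν∈V} A_ν ω_ν² on dual scalar fields. -/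
open Finset

noncomputable section

open StagMesh

namespace StagMesh

variable {C V E : Type} [Fintype C] [Fintype V] [Fintype E]
  [DecidableEq C] [DecidableEq V]

lemma innerE_grad (M : StagMesh C V E) (φ : C → ℝ) (u : E → ℝ) :
    M.innerE (M.grad φ) u = -(1/2) * ∑ i, φ i * (M.Ac i * M.dvg u i) := by
  unfold innerE grad Ae dvg
  have h : ∀ e : E, (1 / 2 * M.l e * M.d e) * (-(1 / M.d e) * ∑ i ∈ M.EC e, M.n e i * φ i) * u e
      = ∑ i ∈ M.EC e, -(1/2) * (φ i * (M.l e * M.n e i * u e)) := by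
    intro e
    have hd := (M.d_pos e).ne'
    have step1 : (1 / 2 * M.l e * M.d e) * (-(1 / M.d e) * ∑ i ∈ M.EC e, M.n e i * φ i) * u e
        = (-(1/2) * M.l e * u e) * ∑ i ∈ M.EC e, M.n e i * φ i := by
      field_simp
    rw [step1, Finset.mul_sum]
    exact Finset.sum_congr rfl fun i _ => by ring
  rw [Finset.sum_congr rfl (fun e _ => h e)]
  rw [Finset.sum_comm' (s := univ) (t := fun e => M.EC e)
    (t' := univ) (s' := fun i => univ.filter (fun e => i ∈ M.EC e)) ?_]
  · rw [Finset.mul_sum]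
    apply Finset.sum_congr rfl
    intro i _
    have hA := (M.Ac_pos i).ne'
    have step2 : ∑ e ∈ univ.filter (fun e => i ∈ M.EC e), -(1/2) * (φ i * (M.l e * M.n e i * u e))
        = (-(1/2) * φ i) * ∑ e ∈ univ.filter (fun e => i ∈ M.EC e), M.l e * M.n e i * u e := by
      rw [Finset.mul_sum]
      exact Finset.sum_congr rfl fun e _ => by ring
    rw [step2]
    field_simp
  · intro e i
    simp [and_comm]

lemma innerE_skewGrad (M : StagMesh C V E) (ψ : V → ℝ) (u : E → ℝ) :
    M.innerE (M.skewGrad ψ) u = -(1/2) * M.innerV ψ (M.curl u) := by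
  unfold innerE skewGrad innerV curl Ae
  have h : ∀ e : E, (1 / 2 * M.l e * M.d e) * ((1 / M.l e) * ∑ ν ∈ M.EV e, M.t e ν * ψ ν) * u e
      = ∑ ν ∈ M.EV e, (1/2) * (ψ ν * (M.d e * M.t e ν * u e)) := by
    intro e
    have hl := (M.l_pos e).ne'
    have step1 : (1 / 2 * M.l e * M.d e) * ((1 / M.l e) * ∑ ν ∈ M.EV e, M.t e ν * ψ ν) * u e
        = ((1/2) * M.d e * u e) * ∑ ν ∈ M.EV e, M.t e ν * ψ ν := by
      field_simp
    rw [step1, Finset.mul_sum]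
    exact Finset.sum_congr rfl fun ν _ => by ring
  rw [Finset.sum_congr rfl (fun e _ => h e)]
  rw [Finset.sum_comm' (s := univ) (t := fun e => M.EV e)
    (t' := univ) (s' := fun ν => univ.filter (fun e => ν ∈ M.EV e)) ?_]
  · rw [Finset.mul_sum]
    apply Finset.sum_congr rfl
    intro ν _
    have hA := (M.Av_pos ν).ne'
    have step2 : ∑ e ∈ univ.filter (fun e => ν ∈ M.EV e), (1/2) * (ψ ν * (M.d e * M.t e ν * u e))
        = ((1/2) * ψ ν) * ∑ e ∈ univ.filter (fun e => ν ∈ M.EV e), M.d e * M.t e ν * u e := by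
      rw [Finset.mul_sum]
      exact Finset.sum_congr rfl fun e _ => by ring
    rw [step2]
    field_simp
  · intro e ν
    simp [and_comm]

lemma innerV_self_nonneg (M : StagMesh C V E) (ψ : V → ℝ) : 0 ≤ M.innerV ψ ψ := by
  unfold innerV
  apply Finset.sum_nonneg
  intro ν _
  have := (M.Av_pos ν).le
  nlinarith [sq_nonneg (ψ ν)]

lemma normV_sq (M : StagMesh C V E) (ψ : V → ℝ) : M.normV ψ ^ 2 = M.innerV ψ ψ :=
  Real.sq_sqrt (M.innerV_self_nonneg ψ)

lemma innerV_cauchy (M : StagMesh C V E) (ψ ω : V → ℝ) :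
    |M.innerV ψ ω| ≤ M.normV ψ * M.normV ω := by
  have key : (M.innerV ψ ω) ^ 2 ≤ M.innerV ψ ψ * M.innerV ω ω := by
    unfold innerV
    have hs : ∀ ν : V, Real.sqrt (M.Av ν) * Real.sqrt (M.Av ν) = M.Av ν :=
      fun ν => Real.mul_self_sqrt (M.Av_pos ν).le
    have h1 : ∀ ν : V, M.Av ν * ψ ν * ω ν
        = (Real.sqrt (M.Av ν) * ψ ν) * (Real.sqrt (M.Av ν) * ω ν) := by
      intro ν; linear_combination ψ ν * ω ν * (hs ν).symm
    have h2 : ∀ ν : V, M.Av ν * ψ ν * ψ ν = (Real.sqrt (M.Av ν) * ψ ν) ^ 2 := by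
      intro ν; linear_combination ψ ν * ψ ν * (hs ν).symm
    have h3 : ∀ ν : V, M.Av ν * ω ν * ω ν = (Real.sqrt (M.Av ν) * ω ν) ^ 2 := by
      intro ν; linear_combination ω ν * ω ν * (hs ν).symm
    calc (∑ ν, M.Av ν * ψ ν * ω ν) ^ 2
        = (∑ ν, (Real.sqrt (M.Av ν) * ψ ν) * (Real.sqrt (M.Av ν) * ω ν)) ^ 2 := by
          rw [Finset.sum_congr rfl (fun ν _ => h1 ν)]
      _ ≤ (∑ ν, (Real.sqrt (M.Av ν) * ψ ν) ^ 2) * (∑ ν, (Real.sqrt (M.Av ν) * ω ν) ^ 2) :=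
          Finset.sum_mul_sq_le_sq_mul_sq univ _ _
      _ = (∑ ν, M.Av ν * ψ ν * ψ ν) * (∑ ν, M.Av ν * ω ν * ω ν) := by
          rw [Finset.sum_congr rfl (fun ν _ => h2 ν), Finset.sum_congr rfl (fun ν _ => h3 ν)]
  have h := Real.sqrt_le_sqrt key
  rwa [Real.sqrt_sq_eq_abs, Real.sqrt_mul (M.innerV_self_nonneg ψ)] at h

end StagMesh

/-- energy bound for the discrete MAC solution: if the discrete
forcing has the Helmholtz form `f = ∇̃⊥_h ψ^f + ∇_h φ^f`, then the solution
`u_h ∈ V_h` of the variational MAC scheme obeys `|∇̃_h×u_h|_0 ≤ |ψ^f|_0`. -/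
theorem mac_energy_bound
    {C V E : Type} [Fintype C] [Fintype V] [Fintype E]
    [DecidableEq C] [DecidableEq V]
    (M : StagMesh C V E) (Ebd : Finset E)
    (hdef : ∀ u : E → ℝ, (∀ e ∈ Ebd, u e = 0) → (∀ i : C, M.dvg u i = 0) →
      M.curl u = 0 → u = 0)
    (ψf : V → ℝ) (φf : C → ℝ) (f : E → ℝ)
    (hf : f = M.skewGrad ψf + M.grad φf)
    (u : E → ℝ)
    (hubd : ∀ e ∈ Ebd, u e = 0) (hudiv : ∀ i : C, M.dvg u i = 0)
    (hvar : ∀ v : E → ℝ, (∀ e ∈ Ebd, v e = 0) → (∀ i : C, M.dvg v i = 0) →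
      M.innerV (M.curl u) (M.curl v) = 2 * M.innerE f v) :
    M.normV (M.curl u) ≤ M.normV ψf := by
  set ω := M.curl u with hω
  have hvaru := hvar u hubd hudiv
  have hfe : M.innerE f u = -(1/2) * M.innerV ψf ω := by
    have : M.innerE f u = M.innerE (M.skewGrad ψf) u + M.innerE (M.grad φf) u := by
      subst hf
      unfold StagMesh.innerE
      rw [← Finset.sum_add_distrib]
      apply Finset.sum_congr rfl
      intro e _
      simp [Pi.add_apply]
      ring
    rw [this, M.innerE_skewGrad, M.innerE_grad]
    have hz : ∑ i, φf i * (M.Ac i * M.dvg u i) = 0 := by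
      apply Finset.sum_eq_zero
      intro i _
      rw [hudiv i]
      ring
    rw [hz]
    ring
  have key : M.innerV ω ω = -M.innerV ψf ω := by
    rw [hvaru, hfe]; ring
  have hcs : |M.innerV ψf ω| ≤ M.normV ψf * M.normV ω := M.innerV_cauchy ψf ω
  have hsq : M.normV ω * M.normV ω = M.innerV ω ω := by
    have := M.normV_sq ω
    nlinarith [this]
  have hb : M.normV ω * M.normV ω ≤ M.normV ψf * M.normV ω := by
    rw [hsq, key]
    calc -M.innerV ψf ω ≤ |M.innerV ψf ω| := neg_le_abs _
      _ ≤ M.normV ψf * M.normV ω := hcs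
  rcases eq_or_lt_of_le (Real.sqrt_nonneg (M.innerV ω ω)) with h0 | h0
  · rw [StagMesh.normV, ← h0]
    exact Real.sqrt_nonneg _
  · have : M.normV ω > 0 := h0
    exact le_of_mul_le_mul_right hb this
end
end
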